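/- Directional stability of the composed quantile map, continuous case (step of Proposition A.3): Let R > 0 and let P, Q be probability measures on ℝ^d supported in the closed ball B̄(0,R) such that for every unit vector u ∈ S^{d−1} the pushforward measures P_u and Q_u of P and Q under x ↦ ⟨u,x⟩ are atomless and have supports that are intervals. Then for all unit vectors u, v ∈ S^{d−1}: ∫_{−R}^{R} |F_{Q,v}^{-1}(F_{P,u}(x)) − F_{Q,v}^{-1}(F_{P,v}(x))| dx ≤ 2R²·‖u − v‖₂. -/

import Mathlib

open MeasureTheory Set

/-- The unit sphere `S^{d-1}` in `ℝ^d`. -/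
def sph (d : ℕ) : Set (EuclideanSpace ℝ (Fin d)) :=
  Metric.sphere (0 : EuclideanSpace ℝ (Fin d)) 1

/-- CDF of the projection of `μ` onto direction `u`. -/
noncomputable def projCDF {d : ℕ} (μ : Measure (EuclideanSpace ℝ (Fin d)))
    (u : EuclideanSpace ℝ (Fin d)) (x : ℝ) : ℝ :=
  (μ {y | (inner ℝ u y : ℝ) ≤ x}).toReal

/-- Quantile function of the projection of `μ` onto direction `u`:
`F_{μ,u}^{-1}(t) = inf {x ∈ [-R,R] : F_{μ,u}(x) ≥ t}`. -/
noncomputable def projQuantile {d : ℕ} (R : ℝ) (μ : Measure (EuclideanSpace ℝ (Fin d)))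
    (u : EuclideanSpace ℝ (Fin d)) (t : ℝ) : ℝ :=
  sInf {x : ℝ | x ∈ Set.Icc (-R) R ∧ t ≤ projCDF μ u x}

/-- Topological support of a measure on `ℝ`. -/
def msupp (μ : Measure ℝ) : Set ℝ := {x | ∀ ε > (0 : ℝ), 0 < μ (Metric.ball x ε)}

/-! Both maps `x ↦ F_{Q,v}⁻¹(F_{P,w}(x))`, `w ∈ {u, v}`, are monotone with values in `[-R, R]`,
and since `P` lives in the ball of radius `R`, each is dominated by the other shifted by
`δ = R‖u - v‖`. For two such functions the area between their graphs is at most `2R·δ`: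
a horizontal line meets that region in a set of diameter at most `δ`, because once `x + δ ≤ y`
both values at `x` lie below both values at `y`. Slicing the area horizontally gives the bound. -/

theorem Real.volume_le_ofReal_of_forall_le_add {S : Set ℝ} {δ : ℝ}
    (h : ∀ x ∈ S, ∀ y ∈ S, y ≤ x + δ) : volume S ≤ ENNReal.ofReal δ := by
  refine (Real.volume_le_diam S).trans (Metric.ediam_le fun x hx y hy => ?_)
  rw [edist_dist, Real.dist_eq]
  exact ENNReal.ofReal_le_ofReal
    (abs_sub_le_iff.2 ⟨by linarith [h y hy x hx], by linarith [h x hx y hy]⟩)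

section ShiftedMonotone

variable {f g : ℝ → ℝ} {a b δ : ℝ}

theorem max_le_min_of_add_le (hδ : 0 ≤ δ) (hf : Monotone f) (hg : Monotone g)
    (hfg : ∀ x, f x ≤ g (x + δ)) (hgf : ∀ x, g x ≤ f (x + δ)) {x y : ℝ} (hxy : x + δ ≤ y) :
    max (f x) (g x) ≤ min (f y) (g y) :=
  max_le (le_min (hf (by linarith)) ((hfg x).trans (hg hxy)))
    (le_min ((hgf x).trans (hf hxy)) (hg (by linarith)))

theorem volume_slice_regionBetween_min_max_le (hδ : 0 ≤ δ) (hf : Monotone f) (hg : Monotone g)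
    (hfg : ∀ x, f x ≤ g (x + δ)) (hgf : ∀ x, g x ≤ f (x + δ)) (s : Set ℝ) (t : ℝ) :
    volume ((fun x => (x, t)) ⁻¹' regionBetween (f ⊓ g) (f ⊔ g) s) ≤ ENNReal.ofReal δ := by
  refine Real.volume_le_ofReal_of_forall_le_add fun x hx y hy => ?_
  by_contra! hxy
  have := max_le_min_of_add_le hδ hf hg hfg hgf hxy.le
  simp only [mem_preimage, regionBetween, mem_ofPred_eq, mem_Ioo, Pi.inf_apply,
    Pi.sup_apply] at hx hy
  linarith [hx.2.2, hy.2.1]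

theorem volume_regionBetween_min_max_le (hδ : 0 ≤ δ) (hf : Monotone f) (hg : Monotone g)
    (hfab : ∀ x, f x ∈ Icc a b) (hgab : ∀ x, g x ∈ Icc a b)
    (hfg : ∀ x, f x ≤ g (x + δ)) (hgf : ∀ x, g x ≤ f (x + δ)) {s : Set ℝ} (hs : MeasurableSet s) :
    volume.prod volume (regionBetween (f ⊓ g) (f ⊔ g) s) ≤ ENNReal.ofReal ((b - a) * δ) := by
  have hslice : ∀ t, volume ((fun x => (x, t)) ⁻¹' regionBetween (f ⊓ g) (f ⊔ g) s) ≤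
      (Icc a b).indicator (fun _ => ENNReal.ofReal δ) t := by
    intro t
    by_cases ht : t ∈ Icc a b
    · rw [indicator_of_mem ht]
      exact volume_slice_regionBetween_min_max_le hδ hf hg hfg hgf s t
    · have hempty : (fun x => (x, t)) ⁻¹' regionBetween (f ⊓ g) (f ⊔ g) s = ∅ :=
        eq_empty_of_forall_notMem fun x ⟨_, hlo, hhi⟩ =>
          ht ⟨(le_min (hfab x).1 (hgab x).1).trans hlo.le,
            hhi.le.trans (max_le (hfab x).2 (hgab x).2)⟩
      rw [indicator_of_notMem ht, hempty, measure_empty]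
  calc volume.prod volume (regionBetween (f ⊓ g) (f ⊔ g) s)
      = ∫⁻ t, volume ((fun x => (x, t)) ⁻¹' regionBetween (f ⊓ g) (f ⊔ g) s) :=
        Measure.prod_apply_symm (measurableSet_regionBetween (hf.measurable.inf hg.measurable)
          (hf.measurable.sup hg.measurable) hs)
    _ ≤ ∫⁻ t, (Icc a b).indicator (fun _ => ENNReal.ofReal δ) t := lintegral_mono hslice
    _ = ENNReal.ofReal ((b - a) * δ) := by
        rw [lintegral_indicator_const measurableSet_Icc, Real.volume_Icc, mul_comm,
          ENNReal.ofReal_mul (sub_nonneg.2 ((hfab 0).1.trans (hfab 0).2))]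

theorem setIntegral_abs_sub_le_of_le_add (hδ : 0 ≤ δ) (hf : Monotone f) (hg : Monotone g)
    (hfab : ∀ x, f x ∈ Icc a b) (hgab : ∀ x, g x ∈ Icc a b)
    (hfg : ∀ x, f x ≤ g (x + δ)) (hgf : ∀ x, g x ≤ f (x + δ)) {s : Set ℝ} (hs : MeasurableSet s) :
    ∫ x in s, |f x - g x| ≤ (b - a) * δ := by
  have hab : a ≤ b := (hfab 0).1.trans (hfab 0).2
  have hm : Measurable fun x => |f x - g x| := (hf.measurable.sub hg.measurable).abs
  rw [integral_eq_lintegral_of_nonneg_ae (ae_of_all _ fun _ => abs_nonneg _)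
    hm.aestronglyMeasurable]
  refine ENNReal.toReal_le_of_le_ofReal (mul_nonneg (sub_nonneg.2 hab) hδ) ?_
  calc ∫⁻ x in s, ENNReal.ofReal |f x - g x|
      = volume.prod volume (regionBetween (f ⊓ g) (f ⊔ g) s) := by
        rw [volume_regionBetween_eq_lintegral' (hf.measurable.inf hg.measurable)
          (hf.measurable.sup hg.measurable) hs]
        simp only [Pi.sub_apply, Pi.sup_apply, Pi.inf_apply, max_sub_min_eq_abs']
    _ ≤ ENNReal.ofReal ((b - a) * δ) :=
        volume_regionBetween_min_max_le hδ hf hg hfab hgab hfg hgf hs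

end ShiftedMonotone

theorem ae_norm_le_of_measure_closedBall_eq_one {E : Type*} [NormedAddCommGroup E]
    [MeasurableSpace E] [OpensMeasurableSpace E] {μ : Measure E} [IsProbabilityMeasure μ] {R : ℝ}
    (h : μ (Metric.closedBall 0 R) = 1) : ∀ᵐ y ∂μ, ‖y‖ ≤ R :=
  ((ae_mem_iff_measure_eq measurableSet_closedBall.nullMeasurableSet).2
    (by rw [h, measure_univ])).mono fun _ hy => mem_closedBall_zero_iff.1 hy

section Projection

variable {d : ℕ} {μ : Measure (EuclideanSpace ℝ (Fin d))} {R : ℝ}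

theorem projCDF_mono [IsFiniteMeasure μ] (w : EuclideanSpace ℝ (Fin d)) :
    Monotone (projCDF μ w) := fun _ _ hxy =>
  ENNReal.toReal_mono (measure_ne_top μ _) (measure_mono fun _ hy => le_trans hy hxy)

theorem projCDF_le_one [IsProbabilityMeasure μ] (w : EuclideanSpace ℝ (Fin d)) (x : ℝ) :
    projCDF μ w x ≤ 1 :=
  measureReal_le_one

theorem projCDF_eq_one [IsProbabilityMeasure μ] (hμ : ∀ᵐ y ∂μ, ‖y‖ ≤ R)
    {w : EuclideanSpace ℝ (Fin d)} (hw : ‖w‖ ≤ 1) {x : ℝ} (hx : R ≤ x) :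
    projCDF μ w x = 1 := by
  have hle : ∀ᵐ y ∂μ, (inner ℝ w y : ℝ) ≤ x := hμ.mono fun y hy =>
    calc (inner ℝ w y : ℝ) ≤ ‖w‖ * ‖y‖ := real_inner_le_norm w y
      _ ≤ 1 * R := mul_le_mul hw hy (norm_nonneg y) zero_le_one
      _ ≤ x := by linarith
  have hmeas : MeasurableSet {y | (inner ℝ w y : ℝ) ≤ x} :=
    measurableSet_le (by fun_prop) measurable_const
  rw [projCDF, (ae_iff_measure_eq hmeas.nullMeasurableSet).1 hle, measure_univ,
    ENNReal.toReal_one]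

theorem projCDF_le_projCDF_add [IsFiniteMeasure μ] (hμ : ∀ᵐ y ∂μ, ‖y‖ ≤ R)
    (u v : EuclideanSpace ℝ (Fin d)) (x : ℝ) :
    projCDF μ v x ≤ projCDF μ u (x + R * ‖u - v‖) := by
  refine ENNReal.toReal_mono (measure_ne_top μ _) (measure_mono_ae (hμ.mono fun y hy hvy => ?_))
  change (inner ℝ v y : ℝ) ≤ x at hvy
  change (inner ℝ u y : ℝ) ≤ x + R * ‖u - v‖
  calc (inner ℝ u y : ℝ) = inner ℝ v y + inner ℝ (u - v) y := by rw [inner_sub_left]; ring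
    _ ≤ x + ‖u - v‖ * ‖y‖ := add_le_add hvy (real_inner_le_norm _ _)
    _ ≤ x + R * ‖u - v‖ := by nlinarith [norm_nonneg (u - v)]

theorem projQuantile_mem_Icc (hR : 0 ≤ R) (μ : Measure (EuclideanSpace ℝ (Fin d)))
    (w : EuclideanSpace ℝ (Fin d)) (t : ℝ) : projQuantile R μ w t ∈ Icc (-R) R := by
  rcases eq_empty_or_nonempty {x | x ∈ Icc (-R) R ∧ t ≤ projCDF μ w x} with h | h
  · rw [projQuantile, h, Real.sInf_empty]
    exact ⟨by linarith, hR⟩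
  · exact ⟨le_csInf h fun x hx => hx.1.1,
    csInf_le_of_le ⟨-R, fun x hx => hx.1.1⟩ h.some_mem h.some_mem.1.2⟩

theorem projQuantile_monotoneOn (hR : 0 ≤ R) (μ : Measure (EuclideanSpace ℝ (Fin d)))
    (w : EuclideanSpace ℝ (Fin d)) : MonotoneOn (projQuantile R μ w) (Iic (projCDF μ w R)) :=
  fun _ _ _ ht₂ ht₁₂ => csInf_le_csInf ⟨-R, fun _ hx => hx.1.1⟩
    ⟨R, ⟨neg_le_self hR, le_rfl⟩, ht₂⟩ fun _ hx => ⟨hx.1, ht₁₂.trans hx.2⟩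

theorem composed_quantile_directional_stability_continuous_general
    (d : ℕ) (R : ℝ) (hR : 0 < R)
    (P Q : Measure (EuclideanSpace ℝ (Fin d)))
    [IsProbabilityMeasure P] [IsProbabilityMeasure Q]
    (hP : P (Metric.closedBall 0 R) = 1) (hQ : Q (Metric.closedBall 0 R) = 1) :
    ∀ u ∈ sph d, ∀ v ∈ sph d,
      ∫ x in (-R)..R,
          |projQuantile R Q v (projCDF P u x) - projQuantile R Q v (projCDF P v x)| ≤
        2 * R ^ 2 * ‖u - v‖ := by
  intro u _ v hv
  have hP' := ae_norm_le_of_measure_closedBall_eq_one hP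
  have hQ' := ae_norm_le_of_measure_closedBall_eq_one hQ
  have hF_le : ∀ w x, projCDF P w x ∈ Iic (projCDF Q v R) := fun w x => by
    rw [projCDF_eq_one hQ' (mem_sphere_zero_iff_norm.1 hv).le le_rfl]
    exact projCDF_le_one w x
  have hmono : ∀ w, Monotone fun x => projQuantile R Q v (projCDF P w x) := fun w _ _ hxy =>
    projQuantile_monotoneOn hR.le Q v (hF_le w _) (hF_le w _) (projCDF_mono w hxy)
  have hshift : ∀ w w' x, projQuantile R Q v (projCDF P w x) ≤
      projQuantile R Q v (projCDF P w' (x + R * ‖w' - w‖)) := fun w w' x =>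
    projQuantile_monotoneOn hR.le Q v (hF_le w _) (hF_le w' _) (projCDF_le_projCDF_add hP' w' w x)
  rw [intervalIntegral.integral_of_le (by linarith)]
  calc _ ≤ (R - -R) * (R * ‖u - v‖) :=
        setIntegral_abs_sub_le_of_le_add (by positivity) (hmono u) (hmono v)
          (fun _ => projQuantile_mem_Icc hR.le Q v _) (fun _ => projQuantile_mem_Icc hR.le Q v _)
          (by simpa only [norm_sub_rev v u] using hshift u v) (hshift v u) measurableSet_Ioc
    _ = 2 * R ^ 2 * ‖u - v‖ := by ring

/-- Directional stability of the composed quantile map, continuous case. -/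
theorem composed_quantile_directional_stability_continuous
    (d : ℕ) (hd : 1 ≤ d) (R : ℝ) (hR : 0 < R)
    (P Q : Measure (EuclideanSpace ℝ (Fin d)))
    [IsProbabilityMeasure P] [IsProbabilityMeasure Q]
    (hP : P (Metric.closedBall 0 R) = 1) (hQ : Q (Metric.closedBall 0 R) = 1)
    (hPa : ∀ u ∈ sph d, ∀ a : ℝ, (Measure.map (fun y => (inner ℝ u y : ℝ)) P) {a} = 0)
    (hQa : ∀ u ∈ sph d, ∀ a : ℝ, (Measure.map (fun y => (inner ℝ u y : ℝ)) Q) {a} = 0)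
    (hPs : ∀ u ∈ sph d, (msupp (Measure.map (fun y => (inner ℝ u y : ℝ)) P)).OrdConnected)
    (hQs : ∀ u ∈ sph d, (msupp (Measure.map (fun y => (inner ℝ u y : ℝ)) Q)).OrdConnected) :
    ∀ u ∈ sph d, ∀ v ∈ sph d,
      ∫ x in (-R)..R,
          |projQuantile R Q v (projCDF P u x) - projQuantile R Q v (projCDF P v x)| ≤
        2 * R ^ 2 * ‖u - v‖ :=
  composed_quantile_directional_stability_continuous_general d R hR P Q hP hQ
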